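/- arXiv:2602.23664 — 6 statements merged into one kernel-verified Lean document; each statement's English description precedes it below -/
import Mathlib

section
/- For every integer N ≥ 2, ∑_{k=1}^{N−1} 1/ sin^2(π k / N) = (N^2 − 1)/3. -/
/-!
Let `ζ = exp (2πi/N)`. Since `|ζᵏ - 1| = 2 sin (πk/N)`, the sum is `4 ∑ 1/|ζᵏ - 1|²`. Every `N`-th
root of unity `z ≠ 1` satisfies `(z - 1) ∑_{j<N} j zʲ = N`, so `1/|ζᵏ - 1|² = |∑ j ζᵏʲ|² / N²` is
the squared discrete Fourier coefficient of `j ↦ j`. By Parseval the sum of these over all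
`k < N` is `N ∑ j²`; removing the `k = 0` term `(∑ j)²` leaves `N² (N² - 1) / 12`.
-/

open Real Finset ComplexConjugate

lemma sum_range_natCast {K : Type*} [Field K] [CharZero K] (n : ℕ) :
    ∑ j ∈ range n, (j : K) = n * (n - 1) / 2 := by
  induction n with
  | zero => simp
  | succ n ih => rw [sum_range_succ, ih]; push_cast; ring

lemma sum_range_natCast_sq {K : Type*} [Field K] [CharZero K] (n : ℕ) :
    ∑ j ∈ range n, (j : K) ^ 2 = n * (n - 1) * (2 * n - 1) / 6 := by
  induction n with
  | zero => simp
  | succ n ih => rw [sum_range_succ, ih]; push_cast; ring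

lemma sub_one_mul_sum_range_natCast_mul_pow {R : Type*} [CommRing R] (z : R) (n : ℕ) :
    (z - 1) * ∑ j ∈ range n, (j : R) * z ^ j = (n - 1) * z ^ n + 1 - ∑ j ∈ range n, z ^ j := by
  induction n with
  | zero => simp
  | succ n ih => rw [sum_range_succ, sum_range_succ, mul_add, ih]; push_cast; ring

lemma sub_one_mul_sum_range_natCast_mul_pow_of_pow_eq_one {K : Type*} [Field K] {z : K} {n : ℕ}
    (hz : z ^ n = 1) (hz1 : z ≠ 1) : (z - 1) * ∑ j ∈ range n, (j : K) * z ^ j = n := by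
  rw [sub_one_mul_sum_range_natCast_mul_pow, geom_sum_eq hz1, hz]
  simp

namespace IsPrimitiveRoot

variable {ζ : ℂ} {N : ℕ}

lemma sum_pow_mul_conj_pow (hζ : IsPrimitiveRoot ζ N) {i j : ℕ} (hi : i < N) (hj : j < N) :
    ∑ k ∈ range N, (ζ ^ k) ^ i * conj ((ζ ^ k) ^ j) = if i = j then (N : ℂ) else 0 := by
  have hζ0 : ζ ≠ 0 := hζ.ne_zero (by omega)
  have hconj : conj ζ = ζ⁻¹ := (Complex.inv_eq_conj (hζ.norm'_eq_one (by omega))).symm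
  have hterm : ∀ k, (ζ ^ k) ^ i * conj ((ζ ^ k) ^ j) = (ζ ^ i / ζ ^ j) ^ k := by
    intro k
    simp only [map_pow, hconj, inv_pow, div_eq_mul_inv, ← pow_mul, mul_pow]
    ring
  simp only [hterm]
  split_ifs with hij
  · simp [hij, hζ0]
  · have hw1 : ζ ^ i / ζ ^ j ≠ 1 := fun h =>
      hij (hζ.pow_inj hi hj ((div_eq_one_iff_eq (pow_ne_zero j hζ0)).mp h))
    have hwN : (ζ ^ i / ζ ^ j) ^ N = 1 := by
      rw [div_pow, ← pow_mul, ← pow_mul, mul_comm i, mul_comm j, pow_mul, pow_mul, hζ.pow_eq_one]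
      simp
    rw [geom_sum_eq hw1, hwN, sub_self, zero_div]

theorem sum_norm_sum_mul_pow_sq (hζ : IsPrimitiveRoot ζ N) (a : ℕ → ℂ) :
    ∑ k ∈ range N, ‖∑ j ∈ range N, a j * (ζ ^ k) ^ j‖ ^ 2 = N * ∑ j ∈ range N, ‖a j‖ ^ 2 := by
  apply Complex.ofReal_injective
  push_cast
  simp_rw [← Complex.mul_conj']
  calc ∑ k ∈ range N, (∑ i ∈ range N, a i * (ζ ^ k) ^ i) * conj (∑ j ∈ range N, a j * (ζ ^ k) ^ j)
      = ∑ i ∈ range N, ∑ j ∈ range N,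
          a i * conj (a j) * ∑ k ∈ range N, (ζ ^ k) ^ i * conj ((ζ ^ k) ^ j) := by
        simp_rw [map_sum, map_mul, sum_mul_sum, mul_sum]
        rw [sum_comm]
        refine sum_congr rfl fun i _ => ?_
        rw [sum_comm]
        exact sum_congr rfl fun j _ => sum_congr rfl fun k _ => by ring
    _ = ∑ i ∈ range N, a i * conj (a i) * N := by
        refine sum_congr rfl fun i hi => ?_
        rw [sum_congr rfl fun j hj => by
          rw [hζ.sum_pow_mul_conj_pow (mem_range.1 hi) (mem_range.1 hj), mul_ite, mul_zero]]
        rw [sum_ite_eq (range N) i, if_pos hi]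
    _ = N * ∑ i ∈ range N, a i * conj (a i) := by
        rw [mul_sum]
        exact sum_congr rfl fun i _ => by ring

theorem sum_Ico_inv_norm_pow_sub_one_sq (hζ : IsPrimitiveRoot ζ N) (hN : N ≠ 0) :
    ∑ k ∈ Ico 1 N, 1 / ‖ζ ^ k - 1‖ ^ 2 = ((N : ℝ) ^ 2 - 1) / 12 := by
  set S : ℕ → ℝ := fun k => ‖∑ j ∈ range N, (j : ℂ) * (ζ ^ k) ^ j‖ ^ 2
  have hterm : ∀ k ∈ Ico 1 N, 1 / ‖ζ ^ k - 1‖ ^ 2 = S k / N ^ 2 := by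
    intro k hk
    obtain ⟨hk1, hkN⟩ := mem_Ico.mp hk
    have hroot : (ζ ^ k) ^ N = 1 := by rw [pow_right_comm, hζ.pow_eq_one, one_pow]
    have hne : ζ ^ k ≠ 1 := hζ.pow_ne_one_of_pos_of_lt (by omega) hkN
    have hmul := congrArg (‖·‖ ^ 2) <| sub_one_mul_sum_range_natCast_mul_pow_of_pow_eq_one hroot hne
    simp only [norm_mul, mul_pow, Complex.norm_natCast] at hmul
    have hnorm : ‖ζ ^ k - 1‖ ≠ 0 := norm_ne_zero_iff.mpr (sub_ne_zero.mpr hne)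
    field_simp
    simpa [S] using hmul.symm
  have hS0 : S 0 = (N * (N - 1) / 2) ^ 2 := by
    simp only [S, pow_zero, one_pow, mul_one]
    rw [← Nat.cast_sum, Complex.norm_natCast, Nat.cast_sum, sum_range_natCast]
  have hparseval : ∑ k ∈ range N, S k = N * (N * (N - 1) * (2 * N - 1) / 6) := by
    rw [hζ.sum_norm_sum_mul_pow_sq]
    simp only [Complex.norm_natCast]
    rw [sum_range_natCast_sq]
  rw [sum_range_eq_add_Ico _ (Nat.pos_of_ne_zero hN), hS0] at hparseval
  rw [sum_congr rfl hterm, ← sum_div, eq_sub_of_add_eq' hparseval]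
  have hNR : (N : ℝ) ≠ 0 := by exact_mod_cast hN
  field_simp
  ring

end IsPrimitiveRoot

lemma norm_exp_two_pi_I_div_pow_sub_one_sq (N k : ℕ) :
    ‖Complex.exp (2 * π * Complex.I / N) ^ k - 1‖ ^ 2 = 4 * Real.sin (π * k / N) ^ 2 := by
  rw [← Complex.exp_nat_mul, show (k : ℂ) * (2 * π * Complex.I / N)
      = Complex.I * ((2 * (π * k / N) : ℝ) : ℂ) by push_cast; ring,
    Complex.norm_exp_I_mul_ofReal_sub_one, mul_div_cancel_left₀ _ two_ne_zero, Real.norm_eq_abs,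
    sq_abs]
  ring

/-- For every integer `N ≥ 2`, `∑_{k=1}^{N−1} 1/sin²(πk/N) = (N² − 1)/3`. -/
theorem sum_inv_sin_sq (N : ℕ) (hN : 2 ≤ N) :
    ∑ k ∈ Finset.Icc 1 (N - 1), 1 / Real.sin (π * k / N) ^ 2 = ((N : ℝ) ^ 2 - 1) / 3 := by
  have hζ := Complex.isPrimitiveRoot_exp N (by omega)
  rw [← Ico_add_one_right_eq_Icc, Nat.sub_add_cancel (by omega : 1 ≤ N)]
  calc ∑ k ∈ Ico 1 N, 1 / Real.sin (π * k / N) ^ 2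
      = 4 * ∑ k ∈ Ico 1 N, 1 / ‖Complex.exp (2 * π * Complex.I / N) ^ k - 1‖ ^ 2 := by
        rw [mul_sum]
        refine sum_congr rfl fun k _ => ?_
        rw [norm_exp_two_pi_I_div_pow_sub_one_sq]
        ring
    _ = ((N : ℝ) ^ 2 - 1) / 3 := by
        rw [hζ.sum_Ico_inv_norm_pow_sub_one_sq (by omega)]
        ring
end

section
/- For every integer N ≥ 2, with ω = exp(2πi/N), ∑_{k=1}^{N−1} 1/|ω^k − 1|^2 = (N^2 − 1)/12. -/
/-!
Differentiating the geometric series shows `(1 - z) ∑_{j<N} j z^j = -N` for every `N`-th root of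
unity `z ≠ 1`, hence `1 / |z - 1|² = |∑_{j<N} j z^j|² / N²`. Summed over `z = ω^k`, `0 < k < N`,
this is a discrete Fourier transform of `j ↦ j` with its `k = 0` term `(∑ j)²` left out, so
Parseval's identity gives `(N ∑_{j<N} j² - (∑_{j<N} j)²) / N² = (N² - 1) / 12`.
-/

open Real Finset ComplexConjugate

variable {R : Type*}

theorem one_sub_mul_sum_range_natCast_mul_pow [CommRing R] (z : R) (n : ℕ) :
    (1 - z) * ∑ j ∈ range n, (j : R) * z ^ j
      = ∑ i ∈ range n, z ^ i - 1 - ((n : R) - 1) * z ^ n := by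
  induction n with
  | zero => simp
  | succ n ih =>
    rw [sum_range_succ, sum_range_succ, mul_add, ih]
    push_cast
    ring

theorem one_sub_mul_sum_range_natCast_mul_pow_of_pow_eq_one [CommRing R] [IsDomain R] {z : R}
    {n : ℕ} (hz : z ^ n = 1) (hz1 : z ≠ 1) :
    (1 - z) * ∑ j ∈ range n, (j : R) * z ^ j = -n := by
  have hgeom : ∑ i ∈ range n, z ^ i = 0 := by
    have h := mul_neg_geom_sum z n
    rw [hz, sub_self] at h
    exact (mul_eq_zero.1 h).resolve_left (sub_ne_zero.2 hz1.symm)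
  rw [one_sub_mul_sum_range_natCast_mul_pow, hgeom, hz]
  ring

theorem inv_norm_sub_one_sq_of_pow_eq_one {z : ℂ} {n : ℕ} (hz : z ^ n = 1) (hz1 : z ≠ 1)
    (hn : n ≠ 0) :
    1 / ‖z - 1‖ ^ 2 = ‖∑ j ∈ range n, (j : ℂ) * z ^ j‖ ^ 2 / n ^ 2 := by
  have h := congrArg norm (one_sub_mul_sum_range_natCast_mul_pow_of_pow_eq_one hz hz1)
  rw [norm_mul, norm_sub_rev, norm_neg, Complex.norm_natCast] at h
  have hz1' : ‖z - 1‖ ≠ 0 := norm_ne_zero_iff.2 (sub_ne_zero.2 hz1)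
  rw [eq_div_of_mul_eq hz1' ((mul_comm _ _).trans h)]
  field_simp

theorem IsPrimitiveRoot.sum_range_pow_pow_mul_inv [Field R] {ζ : R} {n j l : ℕ}
    (hζ : IsPrimitiveRoot ζ n) (hj : j < n) (hl : l < n) :
    ∑ k ∈ range n, (ζ ^ k) ^ j * ((ζ ^ k) ^ l)⁻¹ = if j = l then (n : R) else 0 := by
  have hζ0 : ζ ≠ 0 := hζ.ne_zero (by omega)
  split_ifs with hjl
  · subst hjl
    simp [hζ0]
  have hsum : ∀ k, (ζ ^ k) ^ j * ((ζ ^ k) ^ l)⁻¹ = (ζ ^ j / ζ ^ l) ^ k := fun k => by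
    rw [div_pow, ← pow_mul, ← pow_mul, ← pow_mul, ← pow_mul, mul_comm j, mul_comm l,
      div_eq_mul_inv]
  have hne : ζ ^ j / ζ ^ l ≠ 1 := fun h =>
    hjl (hζ.pow_inj hj hl (div_eq_one_iff_eq (pow_ne_zero l hζ0) |>.1 h))
  simp_rw [hsum, geom_sum_eq hne, div_pow, ← pow_mul, mul_comm j, mul_comm l, pow_mul,
    hζ.pow_eq_one, one_pow, div_one, sub_self, zero_div]

theorem IsPrimitiveRoot.sum_range_norm_sq_sum_mul_pow {ω : ℂ} {n : ℕ} (hω : IsPrimitiveRoot ω n)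
    (a : ℕ → ℂ) :
    ∑ k ∈ range n, ‖∑ j ∈ range n, a j * (ω ^ k) ^ j‖ ^ 2 = n * ∑ j ∈ range n, ‖a j‖ ^ 2 := by
  rcases eq_or_ne n 0 with rfl | hn
  · simp
  have hconj : conj ω = ω⁻¹ := (Complex.inv_eq_conj (hω.norm'_eq_one hn)).symm
  apply Complex.ofReal_injective
  push_cast
  simp_rw [← Complex.mul_conj', map_sum, map_mul, map_pow, hconj, inv_pow, sum_mul_sum]
  calc ∑ k ∈ range n, ∑ j ∈ range n, ∑ l ∈ range n,
        a j * (ω ^ k) ^ j * (conj (a l) * ((ω ^ k) ^ l)⁻¹)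
      = ∑ j ∈ range n, ∑ l ∈ range n,
          a j * conj (a l) * ∑ k ∈ range n, (ω ^ k) ^ j * ((ω ^ k) ^ l)⁻¹ := by
        rw [sum_comm]
        refine sum_congr rfl fun j _ => ?_
        rw [sum_comm]
        refine sum_congr rfl fun l _ => ?_
        rw [mul_sum]
        exact sum_congr rfl fun k _ => by ring
    _ = n * ∑ j ∈ range n, a j * conj (a j) := by
        rw [mul_sum]
        refine sum_congr rfl fun j hj => ?_
        rw [sum_congr rfl fun l hl => by
          rw [hω.sum_range_pow_pow_mul_inv (mem_range.1 hj) (mem_range.1 hl)]]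
        simp only [mul_ite, mul_zero, sum_ite_eq, if_pos hj]
        ring

theorem sum_range_natCast_mul_two [CommRing R] (n : ℕ) :
    (∑ j ∈ range n, (j : R)) * 2 = n * (n - 1) := by
  induction n with
  | zero => simp
  | succ n ih =>
    rw [sum_range_succ, add_mul, ih]
    push_cast
    ring

theorem sum_range_natCast_sq_mul_six [CommRing R] (n : ℕ) :
    (∑ j ∈ range n, (j : R) ^ 2) * 6 = n * (n - 1) * (2 * n - 1) := by
  induction n with
  | zero => simp
  | succ n ih =>
    rw [sum_range_succ, add_mul, ih]
    push_cast
    ring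

theorem natCast_mul_sum_range_sq_sub_sq_sum_range [CommRing R] (n : ℕ) :
    (n * ∑ j ∈ range n, (j : R) ^ 2 - (∑ j ∈ range n, (j : R)) ^ 2) * 12
      = n ^ 2 * (n ^ 2 - 1) := by
  linear_combination (2 * (n : R)) * sum_range_natCast_sq_mul_six (R := R) n
    - 3 * (2 * ∑ j ∈ range n, (j : R) + n * (n - 1)) * sum_range_natCast_mul_two (R := R) n

/-- For every integer `N ≥ 2` with `ω = exp(2πi/N)`,
`∑_{k=1}^{N−1} 1/|ω^k − 1|² = (N² − 1)/12`. -/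
theorem sum_inv_abs_sq (N : ℕ) (hN : 2 ≤ N) (ω : ℂ)
    (hω : ω = Complex.exp (2 * π * Complex.I / N)) :
    ∑ k ∈ Finset.Icc 1 (N - 1), 1 / ‖ω ^ k - 1‖ ^ 2 = ((N : ℝ) ^ 2 - 1) / 12 := by
  have hN0 : N ≠ 0 := by omega
  have hprim : IsPrimitiveRoot ω N := hω ▸ Complex.isPrimitiveRoot_exp N hN0
  have hterm : ∀ k ∈ Icc 1 (N - 1),
      1 / ‖ω ^ k - 1‖ ^ 2 = ‖∑ j ∈ range N, (j : ℂ) * (ω ^ k) ^ j‖ ^ 2 / N ^ 2 := by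
    intro k hk
    rw [mem_Icc] at hk
    refine inv_norm_sub_one_sq_of_pow_eq_one ?_
      (hprim.pow_ne_one_of_pos_of_lt (by omega) (by omega)) hN0
    rw [pow_right_comm, hprim.pow_eq_one, one_pow]
  have hparseval := hprim.sum_range_norm_sq_sum_mul_pow (fun j => (j : ℂ))
  rw [sum_range_eq_add_Ico _ (by omega)] at hparseval
  rw [sum_congr rfl hterm, ← sum_div, Icc_sub_one_right_eq_Ico_of_not_isMin (by simpa using hN0),
    eq_sub_of_add_eq' hparseval]
  simp only [pow_zero, one_pow, mul_one, Complex.norm_natCast]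
  rw [← Nat.cast_sum, Complex.norm_natCast, Nat.cast_sum]
  field_simp
  linear_combination natCast_mul_sum_range_sq_sub_sq_sum_range (R := ℝ) N
end

section
/- Let N ≥ 2 be an integer, ω = exp(2πi/N), and let the normalized linear state L ∈ ℂ^N have components L_x = √(12/(N(N²−1))) · ((N−1)/2 − x) for x = 0, …, N−1. Let F be the discrete Fourier transform on ℂ^N with matrix entries F_{k,x} = ω^{k x}/√N. Then (F L)_0 = 0 and, for every k with 1 ≤ k ≤ N−1, (F L)_k = −√(12/(N²−1)) · 1/(ω^k − 1) = √(3/(N²−1)) · (1 + i·cot(π k / N)). In particular, F L equals the normalized cotangent state whose k-th component is √(3/(N²−1))(1 + i cot(πk/N)) for 1 ≤ k ≤ N−1 and 0 for k = 0. -/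
open Real

lemma aux_sum_mul_pow (N : ℕ) (z : ℂ) (hz : z ≠ 1) (hzN : z ^ N = 1) :
    ∑ x ∈ Finset.range N, (x : ℂ) * z ^ x = N / (z - 1) := by
  have hz0 : z - 1 ≠ 0 := sub_ne_zero.mpr hz
  have hgeom : ∑ x ∈ Finset.range N, z ^ x = 0 := by
    rw [geom_sum_eq hz, hzN]; simp
  have tele : ∑ x ∈ Finset.range N,
      (((x + 1 : ℕ) : ℂ) * z ^ (x + 1) - (x : ℂ) * z ^ x) = (N : ℂ) * z ^ N - 0 := by
    have := Finset.sum_range_sub (fun x : ℕ => (x : ℂ) * z ^ x) N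
    simpa using this
  have key : (∑ x ∈ Finset.range N, (x : ℂ) * z ^ x) * (z - 1) = N := by
    have expand : (∑ x ∈ Finset.range N, (x : ℂ) * z ^ x) * (z - 1)
        = (∑ x ∈ Finset.range N,
            (((x + 1 : ℕ) : ℂ) * z ^ (x + 1) - (x : ℂ) * z ^ x))
          - z * ∑ x ∈ Finset.range N, z ^ x := by
      rw [Finset.sum_mul, Finset.mul_sum, ← Finset.sum_sub_distrib]
      apply Finset.sum_congr rfl
      intro x _
      push_cast
      ring
    rw [expand, tele, hzN, hgeom]
    ring
  rw [eq_div_iff hz0]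
  exact key

lemma aux_cot (t : ℝ) (hs : Real.sin t ≠ 0) :
    -(1 / (Complex.exp (2 * (t : ℂ) * Complex.I) - 1))
      = (1 + Complex.I * (Real.cot t : ℂ)) / 2 := by
  set s : ℂ := (Real.sin t : ℂ) with hs_def
  set c : ℂ := (Real.cos t : ℂ) with hc_def
  have hc : (Real.cot t : ℂ) = c / s := by
    rw [hs_def, hc_def, Real.cot_eq_cos_div_sin]; push_cast; ring
  have hexp : Complex.exp (2 * (t : ℂ) * Complex.I)
      = (2 * c ^ 2 - 1) + (2 * s * c) * Complex.I := by
    rw [Complex.exp_mul_I]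
    have h1 : Complex.cos (2 * (t : ℂ)) = 2 * c ^ 2 - 1 := by
      rw [hc_def]
      rw [show (2 * (t:ℂ)) = ((2*t : ℝ) : ℂ) by push_cast; ring, ← Complex.ofReal_cos,
        Real.cos_two_mul]
      push_cast; ring
    have h2 : Complex.sin (2 * (t : ℂ)) = 2 * s * c := by
      rw [hs_def, hc_def]
      rw [show (2 * (t:ℂ)) = ((2*t : ℝ) : ℂ) by push_cast; ring, ← Complex.ofReal_sin,
        Real.sin_two_mul]
      push_cast; ring
    rw [h1, h2]
  have pyth : s ^ 2 + c ^ 2 = 1 := by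
    rw [hs_def, hc_def]; exact_mod_cast Real.sin_sq_add_cos_sq t
  have hsC : s ≠ 0 := by rw [hs_def]; exact_mod_cast hs
  have key' : (s + Complex.I * c) * (((2 * c ^ 2 - 1) + (2 * s * c) * Complex.I) - 1)
      = -2 * s := by
    linear_combination 2 * c * Complex.I * pyth + 2 * s * c ^ 2 * Complex.I_sq
  have key : (1 + Complex.I * (c / s)) *
      (Complex.exp (2 * (t : ℂ) * Complex.I) - 1) = -2 := by
    rw [hexp]
    have h1 : (1 + Complex.I * (c / s)) = (s + Complex.I * c) / s := by field_simp
    rw [h1, div_mul_eq_mul_div, key']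
    field_simp
  have hne : Complex.exp (2 * (t : ℂ) * Complex.I) - 1 ≠ 0 := by
    intro h
    rw [h, mul_zero] at key
    norm_num at key
  rw [hc]
  have h2 : (1 + Complex.I * (c / s)) = -2 / (Complex.exp (2 * (t : ℂ) * Complex.I) - 1) := by
    rw [eq_div_iff hne]; exact key
  rw [h2]
  ring

/-- Proposition 3: the discrete (quantum) Fourier transform of the normalized linear
state is the normalized cotangent state. -/
theorem qft_linear_state (N : ℕ) (hN : 2 ≤ N) (ω : ℂ)
    (hω : ω = Complex.exp (2 * π * Complex.I / N))
    (L : Fin N → ℂ)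
    (hL : ∀ x : Fin N,
      L x = (Real.sqrt (12 / (N * ((N : ℝ) ^ 2 - 1))) : ℂ) * (((N : ℂ) - 1) / 2 - (x : ℕ)))
    (F : Matrix (Fin N) (Fin N) ℂ)
    (hF : ∀ k x : Fin N, F k x = ω ^ ((k : ℕ) * (x : ℕ)) / (Real.sqrt N : ℂ)) :
    F.mulVec L ⟨0, by omega⟩ = 0 ∧
    ∀ k : Fin N, 1 ≤ (k : ℕ) →
      F.mulVec L k = -(Real.sqrt (12 / ((N : ℝ) ^ 2 - 1)) : ℂ) * (1 / (ω ^ (k : ℕ) - 1)) ∧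
      F.mulVec L k = (Real.sqrt (3 / ((N : ℝ) ^ 2 - 1)) : ℂ) *
        (1 + Complex.I * (Real.cot (π * (k : ℕ) / N) : ℂ)) := by
  have hN0 : (N : ℝ) ≠ 0 := by positivity
  have hNR : (2 : ℝ) ≤ (N : ℝ) := by exact_mod_cast hN
  have hd : (0 : ℝ) < (N : ℝ) ^ 2 - 1 := by nlinarith
  set d : ℝ := (N : ℝ) ^ 2 - 1 with hd_def
  set cL : ℝ := Real.sqrt (12 / (N * d)) with hcL_def
  have hprim : IsPrimitiveRoot ω N := by
    rw [hω]; exact Complex.isPrimitiveRoot_exp N (by omega)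
  -- generic computation of the mulVec entries
  have hmv : ∀ k : Fin N, F.mulVec L k
      = (cL : ℂ) / (Real.sqrt N : ℂ) *
        ∑ x ∈ Finset.range N, (ω ^ (k : ℕ)) ^ x * (((N : ℂ) - 1) / 2 - x) := by
    intro k
    rw [Matrix.mulVec, dotProduct, Finset.mul_sum]
    rw [← Fin.sum_univ_eq_sum_range
      (fun x : ℕ => (cL : ℂ) / (Real.sqrt N : ℂ) * ((ω ^ (k : ℕ)) ^ x * (((N : ℂ) - 1) / 2 - x)))]
    apply Finset.sum_congr rfl
    intro x _
    rw [hF, hL, ← pow_mul]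
    ring
  have gauss : ∑ x ∈ Finset.range N, ((x : ℕ) : ℂ) = (N : ℂ) * ((N : ℂ) - 1) / 2 := by
    have h := Finset.sum_range_id_mul_two N
    have h2 : (∑ x ∈ Finset.range N, ((x : ℕ) : ℂ)) * 2 = (N : ℂ) * ((N : ℂ) - 1) := by
      have := congrArg (fun n : ℕ => (n : ℂ)) h
      push_cast [Nat.cast_sub (by omega : 1 ≤ N)] at this
      convert this using 2
    rw [eq_div_iff (two_ne_zero)]
    exact h2
  constructor
  · -- k = 0
    rw [hmv ⟨0, by omega⟩]
    have : ∑ x ∈ Finset.range N, (ω ^ ((⟨0, by omega⟩ : Fin N) : ℕ)) ^ x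
        * (((N : ℂ) - 1) / 2 - x) = 0 := by
      have h0 : ((⟨0, by omega⟩ : Fin N) : ℕ) = 0 := rfl
      rw [h0]
      simp only [pow_zero, one_pow, one_mul]
      rw [Finset.sum_sub_distrib, Finset.sum_const, Finset.card_range, gauss, nsmul_eq_mul]
      ring
    rw [this, mul_zero]
  · intro k hk
    set z : ℂ := ω ^ (k : ℕ) with hz_def
    have hzN : z ^ N = 1 := by
      rw [hz_def, ← pow_mul, mul_comm, pow_mul, hprim.pow_eq_one, one_pow]
    have hz1 : z ≠ 1 := by
      intro h
      have := (hprim.pow_eq_one_iff_dvd (k : ℕ)).mp h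
      have := Nat.le_of_dvd (by omega) this
      omega
    have hz0 : z - 1 ≠ 0 := sub_ne_zero.mpr hz1
    have hgeom : ∑ x ∈ Finset.range N, z ^ x = 0 := by
      rw [geom_sum_eq hz1, hzN]; simp
    have hS : ∑ x ∈ Finset.range N, z ^ x * (((N : ℂ) - 1) / 2 - x)
        = -((N : ℂ) / (z - 1)) := by
      have : ∑ x ∈ Finset.range N, z ^ x * (((N : ℂ) - 1) / 2 - x)
          = ((N : ℂ) - 1) / 2 * (∑ x ∈ Finset.range N, z ^ x)
            - ∑ x ∈ Finset.range N, (x : ℂ) * z ^ x := by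
        rw [Finset.mul_sum, ← Finset.sum_sub_distrib]
        apply Finset.sum_congr rfl
        intro x _
        ring
      rw [this, hgeom, aux_sum_mul_pow N z hz1 hzN]
      ring
    have hsqrtN : Real.sqrt N ≠ 0 := by positivity
    have hNC : ((Real.sqrt N : ℝ) : ℂ) ≠ 0 := by exact_mod_cast hsqrtN
    have hsq : ((Real.sqrt N : ℝ) : ℂ) * ((Real.sqrt N : ℝ) : ℂ) = (N : ℂ) := by
      rw [← Complex.ofReal_mul, Real.mul_self_sqrt (by positivity)]
      push_cast; rfl
    have hr : Real.sqrt (12 / d) * Real.sqrt N = cL * N := by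
      rw [← Real.sqrt_mul (by positivity) (N : ℝ)]
      have : (12 : ℝ) / d * N = 12 / (N * d) * (N : ℝ) ^ 2 := by
        field_simp
      rw [this, Real.sqrt_mul (by positivity), Real.sqrt_sq (by positivity), hcL_def]
    have hrC : ((Real.sqrt (12 / d) : ℝ) : ℂ) * ((Real.sqrt N : ℝ) : ℂ)
        = (cL : ℂ) * (N : ℂ) := by
      rw [← Complex.ofReal_mul, hr]; push_cast; ring
    have eq1 : F.mulVec L k = -(Real.sqrt (12 / d) : ℂ) * (1 / (z - 1)) := by
      have hco : (cL : ℂ) / ((Real.sqrt N : ℝ) : ℂ) * (N : ℂ)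
          = ((Real.sqrt (12 / d) : ℝ) : ℂ) := by
        rw [div_mul_eq_mul_div, div_eq_iff hNC]
        exact hrC.symm
      rw [hmv k, ← hz_def, hS]
      calc (cL : ℂ) / ((Real.sqrt N : ℝ) : ℂ) * -((N : ℂ) / (z - 1))
          = -((cL : ℂ) / ((Real.sqrt N : ℝ) : ℂ) * (N : ℂ)) * (1 / (z - 1)) := by ring
        _ = -(Real.sqrt (12 / d) : ℂ) * (1 / (z - 1)) := by rw [hco]
    refine ⟨eq1, ?_⟩
    set t : ℝ := π * (k : ℕ) / N with ht_def
    have hNC0 : (N : ℂ) ≠ 0 := by exact_mod_cast (by positivity : (N : ℝ) ≠ 0)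
    have hz_exp : z = Complex.exp (2 * (t : ℂ) * Complex.I) := by
      rw [hz_def, hω, ← Complex.exp_nat_mul]
      congr 1
      rw [ht_def]
      push_cast
      field_simp
    have hk1 : (1 : ℝ) ≤ ((k : ℕ) : ℝ) := by exact_mod_cast hk
    have hkN : ((k : ℕ) : ℝ) < (N : ℝ) := by exact_mod_cast k.isLt
    have hNpos : (0 : ℝ) < (N : ℝ) := by positivity
    have ht0 : 0 < t := by
      rw [ht_def]
      apply div_pos _ hNpos
      nlinarith [Real.pi_pos]
    have htpi : t < π := by
      rw [ht_def, div_lt_iff₀ hNpos]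
      nlinarith [Real.pi_pos]
    have hsin : Real.sin t ≠ 0 := ne_of_gt (Real.sin_pos_of_pos_of_lt_pi ht0 htpi)
    have h12 : ((Real.sqrt (12 / d) : ℝ) : ℂ) = 2 * ((Real.sqrt (3 / d) : ℝ) : ℂ) := by
      rw [show (12 : ℝ) / d = 2 ^ 2 * (3 / d) by ring, Real.sqrt_mul (by positivity),
        Real.sqrt_sq (by norm_num)]
      push_cast
      ring
    rw [eq1]
    calc -(Real.sqrt (12 / d) : ℂ) * (1 / (z - 1))
        = (Real.sqrt (12 / d) : ℂ)
            * -(1 / (Complex.exp (2 * (t : ℂ) * Complex.I) - 1)) := by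
          rw [← hz_exp]; ring
      _ = (Real.sqrt (12 / d) : ℂ) * ((1 + Complex.I * (Real.cot t : ℂ)) / 2) := by
          rw [aux_cot t hsin]
      _ = (Real.sqrt (3 / d) : ℂ) * (1 + Complex.I * (Real.cot t : ℂ)) := by
          rw [h12]; ring
end

section
/- For every real x with 0 < x < π, cot x < 1/x − x/3. -/
open Real

/- Clearing denominators, the claim is `0 < f x` for `f y = (3 - y²) sin y - 3 y cos y`.
Since `f 0 = 0` and `f' y = y (sin y - y cos y)`, it suffices that `y cos y < sin y` on `(0, π)`,
which is `y < tan y` where `cos y > 0`. -/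

lemma mul_cos_lt_sin {y : ℝ} (h0 : 0 < y) (hπ : y < π) : y * cos y < sin y := by
  have hsin : 0 < sin y := sin_pos_of_pos_of_lt_pi h0 hπ
  rcases le_or_gt (cos y) 0 with hcos | hcos
  · nlinarith
  · have hy : y < π / 2 := by
      by_contra! hy
      linarith [cos_nonpos_of_pi_div_two_le_of_le hy (by linarith [pi_pos])]
    have htan := lt_tan h0 hy
    rwa [tan_eq_sin_div_cos, lt_div_iff₀ hcos] at htan

lemma hasDerivAt_three_sub_sq_mul_sin_sub_three_mul_cos (y : ℝ) :
    HasDerivAt (fun y => (3 - y ^ 2) * sin y - 3 * y * cos y)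
      (y * (sin y - y * cos y)) y := by
  have hquad : HasDerivAt (fun y : ℝ => 3 - y ^ 2) (-(2 * y)) y := by
    simpa using (hasDerivAt_pow 2 y).const_sub 3
  have hlin : HasDerivAt (fun y : ℝ => 3 * y) 3 y := by
    simpa using (hasDerivAt_id y).const_mul 3
  exact ((hquad.mul (hasDerivAt_sin y)).sub (hlin.mul (hasDerivAt_cos y))).congr_deriv (by ring)

lemma three_sub_sq_mul_sin_sub_three_mul_cos_pos {x : ℝ} (h0 : 0 < x) (hπ : x ≤ π) :
    0 < (3 - x ^ 2) * sin x - 3 * x * cos x := by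
  set f : ℝ → ℝ := fun y => (3 - y ^ 2) * sin y - 3 * y * cos y with hf
  have hmono : StrictMonoOn f (Set.Icc 0 π) := by
    refine strictMonoOn_of_deriv_pos (convex_Icc 0 π) (by fun_prop) fun y hy => ?_
    rw [interior_Icc] at hy
    rw [(hasDerivAt_three_sub_sq_mul_sin_sub_three_mul_cos y).deriv]
    exact mul_pos hy.1 (sub_pos.2 (mul_cos_lt_sin hy.1 hy.2))
  have := hmono (Set.left_mem_Icc.2 pi_pos.le) ⟨h0.le, hπ⟩ h0
  simpa [hf] using this

/-- For every real `x` with `0 < x < π`, `cot x < 1/x − x/3`. -/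
theorem cot_lt_inv_sub_third (x : ℝ) (h0 : 0 < x) (hπ : x < π) :
    Real.cot x < 1 / x - x / 3 := by
  have hsin : 0 < sin x := sin_pos_of_pos_of_lt_pi h0 hπ
  have hgap : (1 / x - x / 3) * sin x - cos x
      = ((3 - x ^ 2) * sin x - 3 * x * cos x) / (3 * x) := by
    field_simp
  have hpos := div_pos (three_sub_sq_mul_sin_sub_three_mul_cos_pos h0 hπ.le)
    (by positivity : (0 : ℝ) < 3 * x)
  rw [cot_eq_cos_div_sin, div_lt_iff₀ hsin]
  linarith
end

section
/- For every real x with 0 < x ≤ π/2, one has 0 ≤ 1/x − x/3 − cot x ≤ x³/30. -/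
/-!
Multiplying through by `3 x sin x` (resp. `30 x sin x`), both inequalities become polynomial
inequalities in `x`, `sin x` and `cos x`. They follow from the alternating Taylor bounds for
`sin` and `cos` on `[0, ∞)`, obtained by integrating `cos ≤ 1` repeatedly. For the upper bound
the leftover term is `x⁵ (1/3 - x²/8 - x⁴/504)`, which is nonnegative once `x² ≤ 5/2`.
-/

open Real Finset Nat

lemma nonneg_of_hasDerivAt_nonneg {f f' : ℝ → ℝ} (hf : ∀ t, HasDerivAt f (f' t) t)
    (hf₀ : f 0 = 0) (hf' : ∀ t, 0 < t → 0 ≤ f' t) {x : ℝ} (hx : 0 ≤ x) : 0 ≤ f x := by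
  have hmono : MonotoneOn f (Set.Ici 0) :=
    monotoneOn_of_hasDerivWithinAt_nonneg (convex_Ici 0)
      (fun t _ => (hf t).continuousAt.continuousWithinAt)
      (fun t _ => (hf t).hasDerivWithinAt)
      (fun t ht => hf' t (by simpa using ht))
  simpa [hf₀] using hmono Set.self_mem_Ici hx hx

namespace Real

noncomputable def sinTaylor (n : ℕ) (x : ℝ) : ℝ :=
  ∑ k ∈ range n, (-1) ^ k * x ^ (2 * k + 1) / (2 * k + 1)!

noncomputable def cosTaylor (n : ℕ) (x : ℝ) : ℝ :=
  ∑ k ∈ range n, (-1) ^ k * x ^ (2 * k) / (2 * k)!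

lemma hasDerivAt_sinTaylor (n : ℕ) (x : ℝ) :
    HasDerivAt (sinTaylor n) (cosTaylor n x) x := by
  unfold sinTaylor cosTaylor
  refine HasDerivAt.fun_sum fun k _ => ?_
  refine (((hasDerivAt_pow (2 * k + 1) x).const_mul ((-1 : ℝ) ^ k)).div_const
    ((2 * k + 1)! : ℝ)).congr_deriv ?_
  rw [Nat.factorial_succ]
  push_cast
  field_simp

lemma hasDerivAt_cosTaylor_succ (n : ℕ) (x : ℝ) :
    HasDerivAt (cosTaylor (n + 1)) (-sinTaylor n x) x := by
  have hshift : cosTaylor (n + 1) =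
      fun y => 1 + ∑ k ∈ range n, (-1 : ℝ) ^ (k + 1) * y ^ (2 * k + 2) / (2 * k + 2)! := by
    ext y
    simp [cosTaylor, sum_range_succ', mul_add, add_comm]
  rw [hshift, sinTaylor, ← sum_neg_distrib]
  refine (HasDerivAt.fun_sum fun k _ => ?_).const_add 1
  refine (((hasDerivAt_pow (2 * k + 2) x).const_mul ((-1 : ℝ) ^ (k + 1))).div_const
    ((2 * k + 2)! : ℝ)).congr_deriv ?_
  rw [Nat.factorial_succ]
  push_cast
  field_simp
  ring

lemma cosTaylor_sinTaylor_remainder_nonneg (n : ℕ) {x : ℝ} (hx : 0 ≤ x) :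
    0 ≤ (-1) ^ n * (cosTaylor (n + 1) x - cos x) ∧
      0 ≤ (-1) ^ n * (sinTaylor (n + 1) x - sin x) := by
  induction n generalizing x with
  | zero => simp [cosTaylor, sinTaylor, cos_le_one, sin_le hx]
  | succ n ih =>
    have hcos {t : ℝ} (ht : 0 ≤ t) : 0 ≤ (-1) ^ (n + 1) * (cosTaylor (n + 2) t - cos t) :=
      nonneg_of_hasDerivAt_nonneg
        (fun s => (((hasDerivAt_cosTaylor_succ (n + 1) s).sub (hasDerivAt_cos s)).const_mul
          ((-1) ^ (n + 1))).congr_deriv (by ring))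
        (by simp [cosTaylor, sum_range_succ'])
        (fun s hs => (ih hs.le).2) ht
    exact ⟨hcos hx, nonneg_of_hasDerivAt_nonneg
      (fun t => ((hasDerivAt_sinTaylor (n + 2) t).sub (hasDerivAt_sin t)).const_mul _)
      (by simp [sinTaylor]) (fun t ht => hcos ht.le) hx⟩

lemma cos_le_taylor_four {x : ℝ} (hx : 0 ≤ x) : cos x ≤ 1 - x ^ 2 / 2 + x ^ 4 / 24 := by
  have := (cosTaylor_sinTaylor_remainder_nonneg 2 hx).1
  norm_num [cosTaylor, sum_range_succ, factorial] at this
  linarith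

lemma sin_le_taylor_five {x : ℝ} (hx : 0 ≤ x) : sin x ≤ x - x ^ 3 / 6 + x ^ 5 / 120 := by
  have := (cosTaylor_sinTaylor_remainder_nonneg 2 hx).2
  norm_num [sinTaylor, sum_range_succ, factorial] at this
  linarith

lemma taylor_six_le_cos {x : ℝ} (hx : 0 ≤ x) :
    1 - x ^ 2 / 2 + x ^ 4 / 24 - x ^ 6 / 720 ≤ cos x := by
  have := (cosTaylor_sinTaylor_remainder_nonneg 3 hx).1
  norm_num [cosTaylor, sum_range_succ, factorial] at this
  linarith

lemma taylor_seven_le_sin {x : ℝ} (hx : 0 ≤ x) :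
    x - x ^ 3 / 6 + x ^ 5 / 120 - x ^ 7 / 5040 ≤ sin x := by
  have := (cosTaylor_sinTaylor_remainder_nonneg 3 hx).2
  norm_num [sinTaylor, sum_range_succ, factorial] at this
  linarith

lemma cot_le_one_div_sub_div_three {x : ℝ} (h0 : 0 < x) (hx : x ^ 2 ≤ 3) :
    cot x ≤ 1 / x - x / 3 := by
  have hsin : 0 < sin x := sin_pos_of_pos_of_lt_pi h0 (by nlinarith [pi_gt_three])
  have key : 3 * x * cos x ≤ (3 - x ^ 2) * sin x := by
    linarith [mul_le_mul_of_nonneg_left (cos_le_taylor_four h0.le) (by positivity : 0 ≤ 3 * x),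
      mul_le_mul_of_nonneg_left (sin_ge_sub_cube h0.le) (by linarith : 0 ≤ 3 - x ^ 2),
      pow_pos h0 5]
  have hrw : (1 / x - x / 3) * sin x = (3 - x ^ 2) * sin x / (3 * x) := by field_simp
  rw [cot_eq_cos_div_sin, div_le_iff₀ hsin, hrw, le_div_iff₀ (by positivity)]
  linarith

lemma one_div_sub_div_three_sub_le_cot {x : ℝ} (h0 : 0 < x) (hx : x ^ 2 ≤ 5 / 2) :
    1 / x - x / 3 - x ^ 3 / 30 ≤ cot x := by
  have hsin : 0 < sin x := sin_pos_of_pos_of_lt_pi h0 (by nlinarith [pi_gt_three])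
  have key : (30 - 10 * x ^ 2 - x ^ 4) * sin x ≤ 30 * x * cos x := by
    have hpoly : 0 ≤ 1 / 3 - x ^ 2 / 8 - x ^ 4 / 504 := by nlinarith
    linarith [sin_le_taylor_five h0.le,
      mul_le_mul_of_nonneg_left (taylor_six_le_cos h0.le) (by positivity : 0 ≤ 30 * x),
      mul_le_mul_of_nonneg_left (taylor_seven_le_sin h0.le) (by positivity : 0 ≤ 10 * x ^ 2),
      mul_le_mul_of_nonneg_left (sin_ge_sub_cube h0.le) (by positivity : 0 ≤ x ^ 4),
      mul_nonneg (pow_pos h0 5).le hpoly]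
  have hrw : (1 / x - x / 3 - x ^ 3 / 30) * sin x =
      (30 - 10 * x ^ 2 - x ^ 4) * sin x / (30 * x) := by field_simp; ring
  rw [cot_eq_cos_div_sin, le_div_iff₀ hsin, hrw, div_le_iff₀ (by positivity)]
  linarith

end Real

/-- For every real `x` with `0 < x ≤ π/2`, `0 ≤ 1/x − x/3 − cot x ≤ x³/30`. -/
theorem cot_expansion_bounds (x : ℝ) (h0 : 0 < x) (hx : x ≤ π / 2) :
    0 ≤ 1 / x - x / 3 - Real.cot x ∧ 1 / x - x / 3 - Real.cot x ≤ x ^ 3 / 30 := by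
  have hsq : x ^ 2 ≤ 5 / 2 := by nlinarith [pi_lt_d2]
  exact ⟨by linarith [cot_le_one_div_sub_div_three h0 (by linarith)],
    by linarith [one_div_sub_div_three_sub_le_cot h0 hsq]⟩
end

section
/- Fix an integer N ≥ 2 and let H_N = ∑_{x=1}^{N−1} 1/x². For each integer M ≥ 1, define the normalized cotangent state c^{(M)} ∈ ℂ^N by c^{(M)}_0 = 0 and c^{(M)}_x = (1 + i·cot(πx/(MN)))/Z_M for 1 ≤ x ≤ N−1, where Z_M = √(∑_{y=1}^{N−1} 1/sin²(πy/(MN))), and define the harmonic sequence state h ∈ ℂ^N by h_0 = 0 and h_x = 1/(x√H_N) for 1 ≤ x ≤ N−1. Then, as M → ∞, M·‖c^{(M)} − i·h‖ converges to π√(N−1)/(N√H_N), where ‖·‖ is the Euclidean (ℓ²) norm on ℂ^N. -/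
open Real Filter

/-- Normalization constant of the cotangent state on `N` points with refinement `M`. -/
noncomputable def cotZ (N M : ℕ) : ℝ :=
  Real.sqrt (∑ y ∈ Finset.Icc 1 (N - 1), 1 / Real.sin (π * y / (M * N)) ^ 2)

/-- The normalized cotangent state `c^{(M)} ∈ ℂ^N`. -/
noncomputable def cotState (N M : ℕ) : EuclideanSpace ℂ (Fin N) := WithLp.toLp 2 fun x =>
  if (x : ℕ) = 0 then 0
  else (1 + Complex.I * (Real.cot (π * (x : ℕ) / (M * N)) : ℂ)) / (cotZ N M : ℂ)

/-- Squared normalization constant `H_N = ∑_{x=1}^{N−1} 1/x²` of the harmonic sequence state. -/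
noncomputable def harmonicSq (N : ℕ) : ℝ := ∑ x ∈ Finset.Icc 1 (N - 1), 1 / (x : ℝ) ^ 2

/-- The normalized harmonic sequence state `h ∈ ℂ^N`. -/
noncomputable def harmonicState (N : ℕ) : EuclideanSpace ℂ (Fin N) := WithLp.toLp 2 fun x =>
  if (x : ℕ) = 0 then 0 else 1 / ((x : ℕ) * (Real.sqrt (harmonicSq N) : ℂ))

/-!
Put `t = π/(MN)`. Multiplying numerator and denominator by `t` turns the coordinates of
`c^{(M)}` into smooth even functions of `t`: `1/Z_M = t/G(t)` and `cot(xt)/Z_M = F_x(t)`, where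
`G(t)² = ∑_y 1/(y·sinc(yt))²` and `F_x(t) = cos(xt)/(x·sinc(xt)·G(t))` (`scaledCotZ N` and
`cotDivScaledCotZ N x` below), with `G(0) = √H_N` and `F_x(0) = 1/(x√H_N) = h_x`. Hence
`M(c_x − i h_x) = (π/N)/G(t) + i·M(F_x(t) − F_x(0))`; the first term tends to `π/(N√H_N)` and
the second to `(π/N)·F_x'(0) = 0`, since `F_x` is even. So `M(c − i h)` converges to the vector
with `N − 1` entries equal to `π/(N√H_N)`.
-/

open Topology

lemma Real.mul_sinc (x : ℝ) : x * sinc x = sin x := by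
  rcases eq_or_ne x 0 with rfl | hx
  · simp
  · rw [sinc_of_ne_zero hx, mul_div_cancel₀ _ hx]

@[fun_prop]
lemma Real.differentiable_sinc : Differentiable ℝ sinc := fun x => by
  rw [sinc_eq_dslope]
  rcases eq_or_ne x 0 with rfl | hx
  · obtain ⟨p, hp⟩ := analyticAt_sin (x := 0)
    exact hp.has_fpower_series_dslope_fslope.differentiableAt
  · exact (differentiableAt_dslope_of_ne hx).2 differentiableAt_sin

lemma DifferentiableAt.hasDerivAt_zero_of_even {f : ℝ → ℝ} (hf : DifferentiableAt ℝ f 0)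
    (heven : ∀ x, f (-x) = f x) : HasDerivAt f 0 0 := by
  have h := deriv_comp_neg (f := f) (x := 0)
  simp only [heven, neg_zero] at h
  have : deriv f 0 = 0 := by linarith
  simpa [this] using hf.hasDerivAt

lemma HasDerivAt.tendsto_nat_mul_sub {f : ℝ → ℝ} {f' : ℝ} (hf : HasDerivAt f f' 0) (c : ℝ) :
    Tendsto (fun M : ℕ => (M : ℝ) * (f (c / M) - f 0)) atTop (𝓝 (c * f')) := by
  rcases eq_or_ne c 0 with rfl | hc
  · simp
  have ht : Tendsto (fun M : ℕ => c / M) atTop (𝓝[≠] 0) :=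
    tendsto_nhdsWithin_iff.2 ⟨tendsto_const_div_atTop_nhds_zero_nat c,
      (eventually_ne_atTop 0).mono fun M hM => div_ne_zero hc (Nat.cast_ne_zero.2 hM)⟩
  refine (((hasDerivAt_iff_tendsto_slope.1 hf).comp ht).const_mul c).congr' ?_
  filter_upwards [eventually_ne_atTop 0] with M hM
  simp only [Function.comp_apply, slope_def_field, sub_zero]
  field_simp

noncomputable def scaledCotZ (N : ℕ) (t : ℝ) : ℝ :=
  √(∑ y ∈ Finset.Icc 1 (N - 1), 1 / ((y : ℝ) * sinc (y * t)) ^ 2)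

noncomputable def cotDivScaledCotZ (N x : ℕ) (t : ℝ) : ℝ :=
  cos (x * t) / (x * sinc (x * t) * scaledCotZ N t)

lemma harmonicSq_pos {N : ℕ} (hN : 2 ≤ N) : 0 < harmonicSq N :=
  Finset.sum_pos (fun x hx => by have := (Finset.mem_Icc.1 hx).1; positivity)
    ⟨1, Finset.mem_Icc.2 ⟨le_rfl, by omega⟩⟩

lemma scaledCotZ_zero (N : ℕ) : scaledCotZ N 0 = √(harmonicSq N) := by
  simp [scaledCotZ, harmonicSq]

lemma scaledCotZ_neg (N : ℕ) (t : ℝ) : scaledCotZ N (-t) = scaledCotZ N t := by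
  simp [scaledCotZ, sinc_neg]

lemma differentiableAt_scaledCotZ {N : ℕ} (hN : 2 ≤ N) : DifferentiableAt ℝ (scaledCotZ N) 0 := by
  refine DifferentiableAt.sqrt (DifferentiableAt.fun_sum fun y hy => ?_) ?_
  · have : (y : ℝ) ≠ 0 := by have := (Finset.mem_Icc.1 hy).1; positivity
    fun_prop (disch := simp [this])
  · simpa [harmonicSq] using (harmonicSq_pos hN).ne'

lemma sqrt_sum_one_div_sin_sq (N : ℕ) {t : ℝ} (ht : 0 ≤ t) :
    √(∑ y ∈ Finset.Icc 1 (N - 1), 1 / sin (y * t) ^ 2) = scaledCotZ N t / t := by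
  have h : ∀ y : ℕ, 1 / sin (y * t) ^ 2 = t⁻¹ ^ 2 * (1 / ((y : ℝ) * sinc (y * t)) ^ 2) := fun y => by
    rw [← mul_sinc, mul_comm (y : ℝ) t, mul_assoc, mul_pow, one_div, one_div, mul_inv, inv_pow]
  simp_rw [h, ← Finset.mul_sum, sqrt_mul (sq_nonneg _), sqrt_sq (inv_nonneg.2 ht), scaledCotZ,
    div_eq_inv_mul]

lemma cot_div_eq_cotDivScaledCotZ (N x : ℕ) {t : ℝ} (ht : t ≠ 0) :
    cot (x * t) / (scaledCotZ N t / t) = cotDivScaledCotZ N x t := by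
  rw [cotDivScaledCotZ, cot_eq_cos_div_sin, ← mul_sinc]
  field_simp

lemma cotDivScaledCotZ_zero (N x : ℕ) :
    cotDivScaledCotZ N x 0 = 1 / (x * √(harmonicSq N)) := by
  simp [cotDivScaledCotZ, scaledCotZ_zero]

lemma cotDivScaledCotZ_neg (N x : ℕ) (t : ℝ) :
    cotDivScaledCotZ N x (-t) = cotDivScaledCotZ N x t := by
  simp [cotDivScaledCotZ, scaledCotZ_neg, sinc_neg]

lemma differentiableAt_cotDivScaledCotZ {N x : ℕ} (hN : 2 ≤ N) (hx : x ≠ 0) :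
    DifferentiableAt ℝ (cotDivScaledCotZ N x) 0 := by
  have hG := differentiableAt_scaledCotZ hN
  have hden : (x : ℝ) * sinc (x * 0) * scaledCotZ N 0 ≠ 0 := by
    simp [scaledCotZ_zero, hx, (sqrt_pos.2 (harmonicSq_pos hN)).ne']
  unfold cotDivScaledCotZ
  fun_prop (disch := exact hden)

lemma cotZ_eq_scaledCotZ_div (N M : ℕ) : cotZ N M = scaledCotZ N (π / N / M) / (π / N / M) := by
  rw [← sqrt_sum_one_div_sin_sq N (by positivity), cotZ]
  congr! 5 with y
  ring

lemma nat_mul_cotState_sub_apply {N M : ℕ} (hN : N ≠ 0) (hM : M ≠ 0) {x : Fin N}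
    (hx : (x : ℕ) ≠ 0) :
    (M : ℂ) * (cotState N M - Complex.I • harmonicState N).ofLp x =
      ((π / N / scaledCotZ N (π / N / M) : ℝ) : ℂ) + Complex.I *
        ((M * (cotDivScaledCotZ N x (π / N / M) - cotDivScaledCotZ N x 0) : ℝ) : ℂ) := by
  have ht : π / N / M ≠ 0 := by positivity
  have hcot : cot (π * (x : ℕ) / (M * N)) / cotZ N M = cotDivScaledCotZ N x (π / N / M) := by
    rw [cotZ_eq_scaledCotZ_div, ← cot_div_eq_cotDivScaledCotZ N x ht]
    congr 2
    ring
  have hinv : (M : ℝ) / cotZ N M = π / N / scaledCotZ N (π / N / M) := by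
    rw [cotZ_eq_scaledCotZ_div]
    field_simp
  rw [← hcot, ← hinv, cotDivScaledCotZ_zero]
  simp only [cotState, harmonicState, PiLp.sub_apply, PiLp.smul_apply, if_neg hx, smul_eq_mul]
  push_cast
  ring_nf

lemma tendsto_nat_mul_cotState_sub_apply {N : ℕ} (hN : 2 ≤ N) (x : Fin N) :
    Tendsto (fun M : ℕ => (M : ℂ) * (cotState N M - Complex.I • harmonicState N).ofLp x) atTop
      (𝓝 (if (x : ℕ) = 0 then 0 else ((π / N / √(harmonicSq N) : ℝ) : ℂ))) := by
  by_cases hx : (x : ℕ) = 0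
  · simp [cotState, harmonicState, hx]
  have ht : Tendsto (fun M : ℕ => π / N / M) atTop (𝓝 0) := tendsto_const_div_atTop_nhds_zero_nat _
  have hG : Tendsto (fun M : ℕ => π / N / scaledCotZ N (π / N / M)) atTop
      (𝓝 (π / N / √(harmonicSq N))) := by
    rw [← scaledCotZ_zero]
    exact tendsto_const_nhds.div ((differentiableAt_scaledCotZ hN).continuousAt.tendsto.comp ht)
      (by simpa [scaledCotZ_zero] using (sqrt_pos.2 (harmonicSq_pos hN)).ne')
  have hF := ((differentiableAt_cotDivScaledCotZ hN hx).hasDerivAt_zero_of_even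
    (cotDivScaledCotZ_neg N x)).tendsto_nat_mul_sub (π / N)
  have hlim := hG.ofReal.add (hF.ofReal.const_mul Complex.I)
  rw [mul_zero, Complex.ofReal_zero, mul_zero, add_zero] at hlim
  rw [if_neg hx]
  refine hlim.congr' ?_
  filter_upwards [eventually_ne_atTop 0] with M hM
  exact_mod_cast (nat_mul_cotState_sub_apply (by omega) hM hx).symm

lemma EuclideanSpace.norm_toLp_ite_eq_zero (N : ℕ) (a : ℂ) :
    ‖(WithLp.toLp 2 fun x : Fin N => if (x : ℕ) = 0 then 0 else a : EuclideanSpace ℂ (Fin N))‖ =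
      √((N : ℝ) - 1) * ‖a‖ := by
  cases N with
  | zero => simp [Subsingleton.elim _ (0 : EuclideanSpace ℂ (Fin 0)), sqrt_eq_zero']
  | succ n =>
    rw [EuclideanSpace.norm_eq, ← sqrt_sq (norm_nonneg a), ← sqrt_mul' _ (sq_nonneg _)]
    simp [Fin.sum_univ_succ]

/-- Lemma 4 (firstpass), asymptotic form: as `M → ∞`,
`M·‖c^{(M)} − i·h‖ → π√(N−1)/(N√H_N)`. -/
theorem cot_state_approx_harmonic (N : ℕ) (hN : 2 ≤ N) :
    Tendsto (fun M : ℕ => (M : ℝ) * ‖cotState N M - Complex.I • harmonicState N‖) atTop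
      (nhds (π * Real.sqrt ((N : ℝ) - 1) / (N * Real.sqrt (harmonicSq N)))) := by
  have hlim : Tendsto (fun M : ℕ => (M : ℂ) • (cotState N M - Complex.I • harmonicState N)) atTop
      (𝓝 (WithLp.toLp 2 fun x : Fin N =>
        if (x : ℕ) = 0 then 0 else ((π / N / √(harmonicSq N) : ℝ) : ℂ))) :=
    ((PiLp.continuous_toLp 2 _).tendsto _).comp
      (tendsto_pi_nhds.2 (tendsto_nat_mul_cotState_sub_apply hN))
  have hnorm := hlim.norm
  rw [EuclideanSpace.norm_toLp_ite_eq_zero, Complex.norm_real,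
    Real.norm_of_nonneg (by positivity)] at hnorm
  convert hnorm using 2 with M
  · rw [norm_smul, Complex.norm_natCast]
  · ring
end
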